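/- Let K be a finite field of cardinality p and n a positive integer. If V is a subgroup of the additive group (M_n(K), +) in which every matrix is nilpotent, then the cardinality of V is at most p^(n choose 2). -/

import Mathlib

/-!
Induction on `n`, writing a matrix of `V` as `[[a, r], [c, B]]`. A nilpotent matrix with `c = 0`
also has `a = 0`, so counting `V` through the maps `A ↦ c`, then `A ↦ B` on the matrices with
`c = 0`, then `A ↦ r` on those with also `B = 0` gives `|V| ≤ |C| |R| |V'|`, where `C` is the group of
columns `c`, `R` the group of rows `r`, and `V'` the group of blocks `B`, which again consists of
nilpotent matrices, so `|V'| ≤ p ^ (n - 1).choose 2` by induction.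

The heart of the argument is that `tr (A B) = 0` whenever `A`, `B` and `A + B` are nilpotent
(even in characteristic `2`): with `U = 1 - X (A + B)` one has `(1 - X A) (1 - X B) = U (1 + X² W)`
where `W(0) = A B`; all of `det (1 - X A)`, `det (1 - X B)`, `det U` equal `1`, so
`1 = det (1 + X² W) ≡ 1 + X² tr W (mod X⁴)` forces `tr W(0) = 0`. For `A ∈ V` and `B ∈ V` supported
on its first row this trace is `r ⬝ c`, so `C` and `R` are orthogonal in `K^(n-1)` and
`|C| |R| ≤ p ^ (n - 1)`.
-/

open Matrix Polynomial Module

theorem AddSubgroup.card_eq_card_inf_ker_mul_card_map {G G' : Type*} [AddGroup G] [AddGroup G']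
    (H : AddSubgroup G) (f : G →+ G') :
    Nat.card H = Nat.card (H ⊓ f.ker : AddSubgroup G) * Nat.card (H.map f) := by
  rw [← AddSubgroup.relIndex_ker, ← AddSubgroup.inf_relIndex_left, ← AddSubgroup.relIndex_bot_left,
    ← AddSubgroup.relIndex_bot_left, AddSubgroup.relIndex_mul_relIndex _ _ _ bot_le inf_le_left]

namespace Matrix

theorem card_mul_card_le_of_dotProduct_eq_zero {K ι : Type*} [Field K] [Finite K]
    [Fintype ι] [DecidableEq ι] (P Q : AddSubgroup (ι → K))
    (hPQ : ∀ x ∈ P, ∀ y ∈ Q, x ⬝ᵥ y = 0) :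
    Nat.card P * Nat.card Q ≤ Nat.card K ^ Fintype.card ι := by
  set S := Submodule.span K (P : Set (ι → K))
  set O := (S.map (dotProductEquiv K ι).toLinearMap).dualCoannihilator
  have hQO : (Q : Set (ι → K)) ⊆ O := by
    intro y hy
    have hSy : S ≤ LinearMap.ker (dotProductEquiv K ι y) :=
      Submodule.span_le.mpr fun x hx ↦ by simpa [dotProduct_comm] using hPQ x hx y hy
    rw [SetLike.mem_coe, Submodule.mem_dualCoannihilator]
    rintro _ ⟨x, hx, rfl⟩
    simpa [dotProduct_comm] using hSy hx
  have hfinrank : finrank K S + finrank K O = Fintype.card ι := by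
    rw [← LinearEquiv.finrank_map_eq (dotProductEquiv K ι) S,
      Subspace.finrank_add_finrank_dualCoannihilator_eq, finrank_fintype_fun_eq_card]
  calc Nat.card P * Nat.card Q ≤ Nat.card S * Nat.card O :=
        Nat.mul_le_mul (Nat.card_mono (Set.toFinite _) Submodule.subset_span)
          (Nat.card_mono (Set.toFinite _) hQO)
    _ = Nat.card K ^ Fintype.card ι := by
        rw [natCard_eq_pow_finrank (K := K) (V := S), natCard_eq_pow_finrank (K := K) (V := O),
          ← pow_add, hfinrank]

section Trace

variable {R n : Type*} [CommRing R] [IsReduced R] [Fintype n] [DecidableEq n]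

theorem charpolyRev_eq_one_of_isNilpotent {M : Matrix n n R} (hM : IsNilpotent M) :
    M.charpolyRev = 1 := by
  obtain ⟨-, hcoeff⟩ := Polynomial.isUnit_iff_coeff_isUnit_isNilpotent.mp
    (isUnit_charpolyRev_of_isNilpotent hM)
  ext (_ | i)
  · simp [coeff_zero_eq_eval_zero]
  · simpa [coeff_one] using (hcoeff (i + 1) i.succ_ne_zero).eq_zero

theorem trace_mul_eq_zero_of_isNilpotent {A B : Matrix n n R}
    (hA : IsNilpotent A) (hB : IsNilpotent B) (hAB : IsNilpotent (A + B)) :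
    trace (A * B) = 0 := by
  set U : Matrix n n R[X] := 1 - (X : R[X]) • (A + B).map C
  set W : Matrix n n R[X] := U.adjugate * (A.map C * B.map C)
  have hU : U.det = 1 := charpolyRev_eq_one_of_isNilpotent hAB
  have hfactor : (1 - (X : R[X]) • A.map C) * (1 - (X : R[X]) • B.map C) =
      U * (1 + (X : R[X]) ^ 2 • W) := by
    rw [Matrix.mul_add, Matrix.mul_smul, ← Matrix.mul_assoc, mul_adjugate, hU, one_smul,
      Matrix.one_mul]
    simp only [U, Matrix.map_add _ (map_add C), smul_add, Matrix.mul_sub, Matrix.sub_mul,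
      Matrix.mul_one, Matrix.one_mul, smul_mul_smul_comm, pow_two]
    abel
  have hdetW : (1 + (X : R[X]) ^ 2 • W).det = 1 := by
    have := congr_arg det hfactor
    rwa [det_mul, det_mul, hU, one_mul, ← charpolyRev, ← charpolyRev,
      charpolyRev_eq_one_of_isNilpotent hA, charpolyRev_eq_one_of_isNilpotent hB, one_mul,
      eq_comm] at this
  have htrW : (trace W).coeff 0 = 0 := by
    rw [det_one_add_smul, add_assoc, add_eq_left] at hdetW
    simpa [coeff_mul_X_pow', ← pow_mul, -coeff_mul_X_pow] using congr_arg (coeff · 2) hdetW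
  have hU0 : U.map (evalRingHom 0) = 1 := by
    ext i j; rcases eq_or_ne i j with rfl | hij <;> simp [U, *]
  have hW0 : W.map (evalRingHom 0) = A * B := by
    simp only [W, ← RingHom.mapMatrix_apply, map_mul, RingHom.map_adjugate]
    simp only [RingHom.mapMatrix_apply, hU0]
    simp [Matrix.map_map, Function.comp_def]
  rw [← hW0, ← AddMonoidHom.map_trace, coe_evalRingHom, ← coeff_zero_eq_eval_zero, htrW]

end Trace

section Blocks

variable {R : Type*} {m : ℕ}

section AddMonoidHoms

variable [AddCommMonoid R]

def firstColTail : Matrix (Fin (m + 1)) (Fin (m + 1)) R →+ (Fin m → R) where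
  toFun A i := A i.succ 0
  map_zero' := rfl
  map_add' _ _ := rfl

def firstRowTail : Matrix (Fin (m + 1)) (Fin (m + 1)) R →+ (Fin m → R) where
  toFun A j := A 0 j.succ
  map_zero' := rfl
  map_add' _ _ := rfl

def lowerRightBlock : Matrix (Fin (m + 1)) (Fin (m + 1)) R →+ Matrix (Fin m) (Fin m) R where
  toFun A := A.submatrix Fin.succ Fin.succ
  map_zero' := rfl
  map_add' _ _ := rfl

@[simp] lemma firstColTail_apply (A : Matrix (Fin (m + 1)) (Fin (m + 1)) R) (i : Fin m) :
    firstColTail A i = A i.succ 0 := rfl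

@[simp] lemma firstRowTail_apply (A : Matrix (Fin (m + 1)) (Fin (m + 1)) R) (j : Fin m) :
    firstRowTail A j = A 0 j.succ := rfl

@[simp] lemma lowerRightBlock_apply (A : Matrix (Fin (m + 1)) (Fin (m + 1)) R) (i j : Fin m) :
    lowerRightBlock A i j = A i.succ j.succ := rfl

end AddMonoidHoms

lemma lowerRightBlock_mul_of_col_zero [NonUnitalNonAssocSemiring R]
    {A : Matrix (Fin (m + 1)) (Fin (m + 1)) R} (hA : ∀ i, A i 0 = 0)
    (B : Matrix (Fin (m + 1)) (Fin (m + 1)) R) :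
    lowerRightBlock (A * B) = lowerRightBlock A * lowerRightBlock B := by
  ext i j
  simp [mul_apply, Fin.sum_univ_succ, hA]

lemma isNilpotent_lowerRightBlock [Semiring R] {A : Matrix (Fin (m + 1)) (Fin (m + 1)) R}
    (hA : ∀ i, A i 0 = 0) (hnil : IsNilpotent A) : IsNilpotent (lowerRightBlock A) := by
  have hpow : ∀ k, lowerRightBlock (A ^ k) = lowerRightBlock A ^ k := by
    intro k
    induction k with
    | zero => exact submatrix_one _ (Fin.succ_injective _)
    | succ k ih => rw [pow_succ', lowerRightBlock_mul_of_col_zero hA, ih, pow_succ']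
  obtain ⟨k, hk⟩ := hnil
  exact ⟨k, by rw [← hpow, hk, map_zero]⟩

lemma col_zero_eq_zero_of_isNilpotent [CommRing R] [IsReduced R]
    {A : Matrix (Fin (m + 1)) (Fin (m + 1)) R} (hnil : IsNilpotent A) (hA : firstColTail A = 0)
    (i : Fin (m + 1)) : A i 0 = 0 := by
  cases i using Fin.cases with
  | succ i => exact congr_fun hA i
  | zero =>
    have hvec : A *ᵥ Pi.single 0 1 = A 0 0 • Pi.single 0 1 := by
      ext i
      cases i using Fin.cases
      · simp [mulVec_single]
      · simpa [mulVec_single] using congr_fun hA _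
    have hpow : ∀ k, (A ^ k) *ᵥ Pi.single 0 1 = A 0 0 ^ k • Pi.single 0 1 := by
      intro k
      induction k with
      | zero => rw [pow_zero, one_mulVec, pow_zero, one_smul]
      | succ k ih => rw [pow_succ', ← mulVec_mulVec, ih, mulVec_smul, hvec, smul_smul, pow_succ]
    obtain ⟨k, hk⟩ := hnil
    refine IsReduced.eq_zero _ ⟨k, ?_⟩
    simpa [hk] using (congr_fun (hpow k) 0).symm

lemma trace_mul_eq_firstRowTail_dotProduct [NonUnitalNonAssocSemiring R]
    {B : Matrix (Fin (m + 1)) (Fin (m + 1)) R} (hB : ∀ (i : Fin m) j, B i.succ j = 0)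
    (hB₀ : B 0 0 = 0) (A : Matrix (Fin (m + 1)) (Fin (m + 1)) R) :
    trace (B * A) = firstRowTail B ⬝ᵥ firstColTail A := by
  simp [trace, mul_apply, Fin.sum_univ_succ (n := m), hB, hB₀, dotProduct]

end Blocks

variable {K : Type*} [Field K] [Finite K]

theorem card_le_pow_mul_card_map_lowerRightBlock {m : ℕ}
    (V : AddSubgroup (Matrix (Fin (m + 1)) (Fin (m + 1)) K)) (hV : ∀ M ∈ V, IsNilpotent M) :
    Nat.card V ≤ Nat.card K ^ m * Nat.card ((V ⊓ firstColTail.ker).map lowerRightBlock) := by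
  set V₀ := V ⊓ firstColTail.ker
  set W := V₀ ⊓ lowerRightBlock.ker
  have hcol : ∀ A ∈ V₀, ∀ i, A i 0 = 0 := fun A ⟨hAV, hAker⟩ ↦
    col_zero_eq_zero_of_isNilpotent (hV A hAV) hAker
  have hW : ∀ B ∈ W, ∀ (i : Fin m) j, B i.succ j = 0 := by
    intro B ⟨hBV₀, hBker⟩ i j
    cases j using Fin.cases
    · exact hcol B hBV₀ _
    · exact congr_fun (congr_fun hBker i) _
  have horth : ∀ x ∈ V.map firstColTail, ∀ y ∈ W.map firstRowTail, x ⬝ᵥ y = 0 := by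
    rintro _ ⟨A, hA, rfl⟩ _ ⟨B, hB, rfl⟩
    have hBV : B ∈ V := hB.1.1
    rw [dotProduct_comm, ← trace_mul_eq_firstRowTail_dotProduct (hW B hB) (hcol B hB.1 0)]
    exact trace_mul_eq_zero_of_isNilpotent (hV B hBV) (hV A hA) (hV _ (V.add_mem hBV hA))
  have hWrow : W ⊓ firstRowTail.ker = ⊥ := by
    rw [eq_bot_iff]
    rintro B ⟨hBW, hBker⟩
    ext i j
    cases i using Fin.cases
    · cases j using Fin.cases
      · exact hcol B hBW.1 0
      · exact congr_fun hBker _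
    · exact hW B hBW _ j
  calc Nat.card V
      = Nat.card W * Nat.card (V₀.map lowerRightBlock) * Nat.card (V.map firstColTail) := by
        rw [V.card_eq_card_inf_ker_mul_card_map firstColTail,
          V₀.card_eq_card_inf_ker_mul_card_map lowerRightBlock]
    _ = Nat.card (V.map firstColTail) * Nat.card (W.map firstRowTail) *
          Nat.card (V₀.map lowerRightBlock) := by
        rw [W.card_eq_card_inf_ker_mul_card_map firstRowTail, hWrow, AddSubgroup.card_bot]
        ring
    _ ≤ Nat.card K ^ m * Nat.card (V₀.map lowerRightBlock) := by
        gcongr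
        simpa using card_mul_card_le_of_dotProduct_eq_zero _ _ horth

theorem card_le_pow_choose_two_of_forall_isNilpotent {n : ℕ}
    (V : AddSubgroup (Matrix (Fin n) (Fin n) K)) (hV : ∀ M ∈ V, IsNilpotent M) :
    Nat.card V ≤ Nat.card K ^ n.choose 2 := by
  induction n with
  | zero => simp [Nat.card_unique]
  | succ m ih =>
    have hblock : ∀ M ∈ (V ⊓ firstColTail.ker).map lowerRightBlock, IsNilpotent M := by
      rintro _ ⟨A, ⟨hAV, hAker⟩, rfl⟩
      exact isNilpotent_lowerRightBlock (col_zero_eq_zero_of_isNilpotent (hV A hAV) hAker)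
        (hV A hAV)
    calc Nat.card V
        ≤ Nat.card K ^ m * Nat.card ((V ⊓ firstColTail.ker).map lowerRightBlock) :=
          card_le_pow_mul_card_map_lowerRightBlock V hV
      _ ≤ Nat.card K ^ m * Nat.card K ^ m.choose 2 := by gcongr; exact ih _ hblock
      _ = Nat.card K ^ (m + 1).choose 2 := by
          rw [← pow_add, Nat.choose_succ_succ, Nat.choose_one_right]

end Matrix

theorem stmt_4_general (K : Type*) [Field K] [Fintype K] (p n : ℕ) (hp : Fintype.card K = p)
    (V : AddSubgroup (Matrix (Fin n) (Fin n) K))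
    (hV : ∀ M ∈ V, IsNilpotent M) :
    Nat.card V ≤ p ^ n.choose 2 := by
  rw [← hp, ← Nat.card_eq_fintype_card]
  exact Matrix.card_le_pow_choose_two_of_forall_isNilpotent V hV

/-- An additive subgroup of nilpotent `n × n` matrices over a finite field of
cardinality `p` has at most `p ^ (n choose 2)` elements. -/
theorem stmt_4 (K : Type*) [Field K] [Fintype K] (p n : ℕ) (hp : Fintype.card K = p)
    (hn : 0 < n)
    (V : AddSubgroup (Matrix (Fin n) (Fin n) K))
    (hV : ∀ M ∈ V, IsNilpotent M) :
    Nat.card V ≤ p ^ n.choose 2 :=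
  stmt_4_general K p n hp V hV
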